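/- Let α : [0,1] → [0,∞) be nondecreasing with α ≤ M, and let p ≥ 1. Then the spectral risk measure R_α is M-Lipschitz with respect to the p-Wasserstein distance on probability measures on ℝ with finite p-th moment: |R_α(μ) - R_α(ν)| ≤ M · W_p(μ, ν). -/

import Mathlib

/-!
Transport μ and ν to `(0,1)` with Lebesgue measure through their quantile functions, which push
it forward to μ and ν. Then `R_α(μ) - R_α(ν) = ∫₀¹ (F_μ⁻¹ - F_ν⁻¹) α`, of absolute value at most
`M ∫₀¹ |F_μ⁻¹ - F_ν⁻¹|`. By Tonelli, `E|X - Y| = ∫ P(exactly one of X ≤ t, Y ≤ t) dt` for any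
real random variables `X`, `Y`. For a coupling of μ and ν that probability is at least
`|F_μ(t) - F_ν(t)|`, with equality for the quantile coupling, whose events `{F_μ⁻¹ ≤ t}` are
nested intervals. Hence `∫₀¹ |F_μ⁻¹ - F_ν⁻¹| ≤ ∫ |x - y| dπ ≤ (∫ |x - y|^p dπ)^(1/p)` for every
coupling `π`, the last step by Jensen.
-/

open MeasureTheory Set

/-- Quantile (generalized inverse c.d.f.) of a probability measure on ℝ. -/
noncomputable def quantile (μ : Measure ℝ) (m : ℝ) : ℝ :=
  sInf {x : ℝ | ENNReal.ofReal m ≤ μ (Iic x)}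

/-- The spectral risk measure `R_α(μ) = ∫_0^1 F_μ⁻¹(m) α(m) dm`. -/
noncomputable def specRisk (α : ℝ → ℝ) (μ : Measure ℝ) : ℝ :=
  ∫ m in Icc (0:ℝ) 1, quantile μ m * α m

/-- The `p`-Wasserstein distance between two probability measures on ℝ, defined as
the infimum over couplings of `(∫ |x-y|^p dπ)^(1/p)`. -/
noncomputable def Wp (p : ℝ) (μ ν : Measure ℝ) : ℝ :=
  sInf {w : ℝ | ∃ π : Measure (ℝ × ℝ), IsProbabilityMeasure π ∧
    π.map Prod.fst = μ ∧ π.map Prod.snd = ν ∧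
    w = (∫ q : ℝ × ℝ, |q.1 - q.2| ^ p ∂π) ^ (1/p)}

open ProbabilityTheory Filter
open scoped ENNReal symmDiff

section LayerCake

variable {Ω : Type*} [MeasurableSpace Ω]

theorem Real.volume_Ici_symmDiff_Ici (x y : ℝ) :
    volume (Ici x ∆ Ici y) = ENNReal.ofReal |x - y| := by
  wlog hxy : x ≤ y generalizing x y
  · rw [symmDiff_comm, abs_sub_comm]
    exact this y x (le_of_not_ge hxy)
  rw [symmDiff_of_ge (Ici_subset_Ici.2 hxy), Ici_sdiff_Ici, Real.volume_Ico, abs_sub_comm,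
    abs_of_nonneg (sub_nonneg.2 hxy)]

theorem lintegral_ofReal_abs_sub_eq_lintegral_measure_symmDiff {P : Measure Ω} [SFinite P]
    {X Y : Ω → ℝ} (hX : AEMeasurable X P) (hY : AEMeasurable Y P) :
    ∫⁻ ω, ENNReal.ofReal |X ω - Y ω| ∂P = ∫⁻ t, P ((X ⁻¹' Iic t) ∆ (Y ⁻¹' Iic t)) := by
  have tonelli : ∀ X Y : Ω → ℝ, Measurable X → Measurable Y →
      ∫⁻ ω, ENNReal.ofReal |X ω - Y ω| ∂P = ∫⁻ t, P ((X ⁻¹' Iic t) ∆ (Y ⁻¹' Iic t)) := by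
    intro X Y hX hY
    set s := {q : Ω × ℝ | X q.1 ≤ q.2} ∆ {q | Y q.1 ≤ q.2}
    have hs : MeasurableSet s :=
      (measurableSet_le (hX.comp measurable_fst) measurable_snd).symmDiff
        (measurableSet_le (hY.comp measurable_fst) measurable_snd)
    calc ∫⁻ ω, ENNReal.ofReal |X ω - Y ω| ∂P
        = ∫⁻ ω, volume (Prod.mk ω ⁻¹' s) ∂P :=
          lintegral_congr fun ω => (Real.volume_Ici_symmDiff_Ici (X ω) (Y ω)).symm
      _ = P.prod volume s := (Measure.prod_apply hs).symm
      _ = ∫⁻ t, P ((fun ω => (ω, t)) ⁻¹' s) := Measure.prod_apply_symm hs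
  calc ∫⁻ ω, ENNReal.ofReal |X ω - Y ω| ∂P
      = ∫⁻ ω, ENNReal.ofReal |hX.mk X ω - hY.mk Y ω| ∂P := by
        refine lintegral_congr_ae ?_
        filter_upwards [hX.ae_eq_mk, hY.ae_eq_mk] with ω hXω hYω
        rw [hXω, hYω]
    _ = ∫⁻ t, P ((hX.mk X ⁻¹' Iic t) ∆ (hY.mk Y ⁻¹' Iic t)) :=
        tonelli _ _ hX.measurable_mk hY.measurable_mk
    _ = ∫⁻ t, P ((X ⁻¹' Iic t) ∆ (Y ⁻¹' Iic t)) := by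
        refine lintegral_congr fun t => measure_congr ?_
        exact ((hX.ae_eq_mk.fun_comp (· ∈ Iic t)).symmDiff
          (hY.ae_eq_mk.fun_comp (· ∈ Iic t))).symm

theorem measure_sub_add_measure_sub_le_measure_symmDiff {P : Measure Ω} {s t : Set Ω}
    (hs : NullMeasurableSet s P) (ht : NullMeasurableSet t P) :
    (P s - P t) + (P t - P s) ≤ P (s ∆ t) := by
  rw [measure_symmDiff_eq hs ht]
  exact add_le_add le_measure_sdiff le_measure_sdiff

end LayerCake

theorem integral_le_integral_rpow_rpow_one_div {Ω : Type*} [MeasurableSpace Ω] {P : Measure Ω}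
    [IsProbabilityMeasure P] {f : Ω → ℝ} {p : ℝ} (hp : 1 ≤ p) (hf0 : ∀ ω, 0 ≤ f ω)
    (hf : Integrable f P) (hfp : Integrable (fun ω => f ω ^ p) P) :
    ∫ ω, f ω ∂P ≤ (∫ ω, f ω ^ p ∂P) ^ (1 / p) := by
  have jensen : (∫ ω, f ω ∂P) ^ p ≤ ∫ ω, f ω ^ p ∂P :=
    (convexOn_rpow hp).map_integral_le (f := f) (fun x _ => (Real.continuousAt_rpow_const x p
      (Or.inr (by linarith))).continuousWithinAt) isClosed_Ici (ae_of_all _ hf0) hf hfp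
  rw [one_div, Real.le_rpow_inv_iff_of_pos (integral_nonneg hf0)
    (integral_nonneg fun ω => Real.rpow_nonneg (hf0 ω) p) (by linarith)]
  exact jensen

theorem abs_integral_mul_sub_integral_mul_le {Ω : Type*} [MeasurableSpace Ω] {P : Measure Ω}
    {f g w : Ω → ℝ} {M : ℝ} (hf : Integrable f P) (hg : Integrable g P)
    (hw : AEStronglyMeasurable w P) (hwM : ∀ᵐ ω ∂P, |w ω| ≤ M) :
    |∫ ω, f ω * w ω ∂P - ∫ ω, g ω * w ω ∂P| ≤ M * ∫ ω, |f ω - g ω| ∂P := by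
  rw [← integral_sub (hf.mul_bdd hw hwM) (hg.mul_bdd hw hwM), ← integral_const_mul]
  refine (Real.norm_eq_abs _).symm.trans_le
    (norm_integral_le_of_norm_le ((hf.sub hg).abs.const_mul M) ?_)
  filter_upwards [hwM] with ω hω
  rw [Real.norm_eq_abs, ← sub_mul, abs_mul, mul_comm M]
  exact mul_le_mul_of_nonneg_left hω (abs_nonneg _)

theorem StieltjesFunction.csInf_preimage_Ici_le_iff (F : StieltjesFunction ℝ) {m t : ℝ}
    (hne : (F ⁻¹' Ici m).Nonempty) (hbdd : BddBelow (F ⁻¹' Ici m)) :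
    sInf (F ⁻¹' Ici m) ≤ t ↔ m ≤ F t := by
  refine ⟨fun ht => ?_, fun ht => csInf_le hbdd ht⟩
  set a := sInf (F ⁻¹' Ici m)
  have ha : m ≤ F a := by
    refine ge_of_tendsto ((F.right_continuous a).mono Ioi_subset_Ici_self) ?_
    filter_upwards [self_mem_nhdsWithin] with x hx
    obtain ⟨y, hy, hyx⟩ := exists_lt_of_csInf_lt hne hx
    exact hy.trans (F.mono hyx.le)
  exact ha.trans (F.mono ht)

theorem volume_restrict_Ioo_zero_one_Ioc {a b : ℝ} (ha : 0 ≤ a) (hb : b ≤ 1) :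
    volume.restrict (Ioo 0 1) (Ioc a b) = ENNReal.ofReal (b - a) := by
  rw [Measure.restrict_apply measurableSet_Ioc]
  refine le_antisymm ((measure_mono inter_subset_left).trans_eq Real.volume_Ioc) ?_
  rw [← Real.volume_Ioo]
  exact measure_mono fun x hx => ⟨Ioo_subset_Ioc_self hx, ha.trans_lt hx.1, hx.2.trans_le hb⟩

theorem volume_restrict_Ioo_zero_one_Iic {a : ℝ} (ha : a ≤ 1) :
    volume.restrict (Ioo 0 1) (Iic a) = ENNReal.ofReal a := by
  have hIic : Iic a ∩ Ioo 0 1 = Ioc 0 a ∩ Ioo 0 1 := by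
    ext x
    simp only [mem_inter_iff, mem_Iic, mem_Ioc, mem_Ioo]
    tauto
  rw [Measure.restrict_apply measurableSet_Iic, hIic, ← Measure.restrict_apply measurableSet_Ioc,
    volume_restrict_Ioo_zero_one_Ioc le_rfl ha, sub_zero]

section Quantile

variable {μ : Measure ℝ} [IsProbabilityMeasure μ]

theorem quantile_le_iff {m t : ℝ} (hm : m ∈ Ioo 0 1) : quantile μ m ≤ t ↔ m ≤ cdf μ t := by
  have hset : {x | ENNReal.ofReal m ≤ μ (Iic x)} = cdf μ ⁻¹' Ici m := by
    ext x
    rw [mem_ofPred_eq, ← ofReal_cdf, ENNReal.ofReal_le_ofReal_iff (cdf_nonneg μ x)]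
    rfl
  rw [quantile, hset]
  refine (cdf μ).csInf_preimage_Ici_le_iff ?_ ?_
  · exact ((tendsto_cdf_atTop μ).eventually (eventually_ge_nhds hm.2)).exists
  · obtain ⟨x₀, hx₀⟩ :=
      eventually_atBot.1 ((tendsto_cdf_atBot μ).eventually (eventually_lt_nhds hm.1))
    refine ⟨x₀, fun x hx => le_of_not_ge fun hxx₀ => ?_⟩
    exact (hx₀ x hxx₀).not_ge hx

theorem monotoneOn_quantile : MonotoneOn (quantile μ) (Ioo 0 1) := fun _ hm _ hm' hmm' =>
  (quantile_le_iff hm).2 (hmm'.trans ((quantile_le_iff hm').1 le_rfl))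

theorem aemeasurable_quantile : AEMeasurable (quantile μ) (volume.restrict (Ioo 0 1)) :=
  aemeasurable_restrict_of_monotoneOn measurableSet_Ioo monotoneOn_quantile

theorem quantile_preimage_Iic_ae_eq (t : ℝ) :
    quantile μ ⁻¹' Iic t =ᵐ[volume.restrict (Ioo 0 1)] Iic (cdf μ t) := by
  filter_upwards [ae_restrict_mem measurableSet_Ioo] with m hm
  exact propext (quantile_le_iff hm)

variable (μ)

theorem map_quantile : (volume.restrict (Ioo 0 1)).map (quantile μ) = μ := by
  refine Measure.ext_of_Iic _ _ fun t => ?_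
  rw [Measure.map_apply_of_aemeasurable aemeasurable_quantile measurableSet_Iic,
    measure_congr (quantile_preimage_Iic_ae_eq t),
    volume_restrict_Ioo_zero_one_Iic (cdf_le_one μ t), ofReal_cdf]

theorem integrable_quantile (h : Integrable id μ) :
    Integrable (quantile μ) (volume.restrict (Ioo 0 1)) := by
  rw [← map_quantile μ] at h
  exact (integrable_map_measure aestronglyMeasurable_id aemeasurable_quantile).1 h

theorem measure_quantile_preimage_Iic_symmDiff (ν : Measure ℝ) [IsProbabilityMeasure ν] (t : ℝ) :
    volume.restrict (Ioo 0 1) ((quantile μ ⁻¹' Iic t) ∆ (quantile ν ⁻¹' Iic t)) =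
      (μ (Iic t) - ν (Iic t)) + (ν (Iic t) - μ (Iic t)) := by
  have hsdiff : ∀ a b : ℝ, Iic a \ Iic b = Ioc b a := fun a b => by
    rw [sdiff_eq, compl_Iic, inter_comm, Ioi_inter_Iic]
  rw [measure_congr ((quantile_preimage_Iic_ae_eq t).symmDiff (quantile_preimage_Iic_ae_eq t)),
    measure_symmDiff_eq measurableSet_Iic.nullMeasurableSet measurableSet_Iic.nullMeasurableSet,
    hsdiff, hsdiff, volume_restrict_Ioo_zero_one_Ioc (cdf_nonneg ν t) (cdf_le_one μ t),
    volume_restrict_Ioo_zero_one_Ioc (cdf_nonneg μ t) (cdf_le_one ν t),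
    ENNReal.ofReal_sub _ (cdf_nonneg ν t), ENNReal.ofReal_sub _ (cdf_nonneg μ t),
    ofReal_cdf, ofReal_cdf]

end Quantile

theorem memLp_id_of_integrable_abs_rpow {μ : Measure ℝ} {p : ℝ} (hp : 0 < p)
    (h : Integrable (fun x => |x| ^ p) μ) : MemLp id (ENNReal.ofReal p) μ := by
  refine (integrable_norm_rpow_iff aestronglyMeasurable_id (by simpa using hp)
    ENNReal.ofReal_ne_top).1 ?_
  simpa [ENNReal.toReal_ofReal hp.le] using h

section Coupling

variable {μ ν : Measure ℝ} {π : Measure (ℝ × ℝ)}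

theorem memLp_fst_sub_snd {p : ℝ≥0∞} (hfst : π.map Prod.fst = μ) (hsnd : π.map Prod.snd = ν)
    (hμ : MemLp id p μ) (hν : MemLp id p ν) : MemLp (fun q : ℝ × ℝ => q.1 - q.2) p π := by
  rw [← hfst] at hμ
  rw [← hsnd] at hν
  exact ((memLp_map_measure_iff aestronglyMeasurable_id measurable_fst.aemeasurable).1 hμ).sub
    ((memLp_map_measure_iff aestronglyMeasurable_id measurable_snd.aemeasurable).1 hν)

variable [IsProbabilityMeasure μ] [IsProbabilityMeasure ν]

theorem lintegral_abs_sub_quantile_le [SFinite π] (hfst : π.map Prod.fst = μ)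
    (hsnd : π.map Prod.snd = ν) :
    ∫⁻ m in Ioo 0 1, ENNReal.ofReal |quantile μ m - quantile ν m| ≤
      ∫⁻ q, ENNReal.ofReal |q.1 - q.2| ∂π := by
  rw [lintegral_ofReal_abs_sub_eq_lintegral_measure_symmDiff aemeasurable_quantile
      aemeasurable_quantile,
    lintegral_ofReal_abs_sub_eq_lintegral_measure_symmDiff measurable_fst.aemeasurable
      measurable_snd.aemeasurable]
  refine lintegral_mono fun t => ?_
  rw [measure_quantile_preimage_Iic_symmDiff, ← hfst, ← hsnd,
    Measure.map_apply measurable_fst measurableSet_Iic,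
    Measure.map_apply measurable_snd measurableSet_Iic]
  exact measure_sub_add_measure_sub_le_measure_symmDiff
    (measurable_fst measurableSet_Iic).nullMeasurableSet
    (measurable_snd measurableSet_Iic).nullMeasurableSet

theorem integral_abs_sub_quantile_le [SFinite π] (hfst : π.map Prod.fst = μ)
    (hsnd : π.map Prod.snd = ν) (hint : Integrable (fun q : ℝ × ℝ => |q.1 - q.2|) π) :
    ∫ m in Ioo 0 1, |quantile μ m - quantile ν m| ≤ ∫ q, |q.1 - q.2| ∂π := by
  have hmeas : AEStronglyMeasurable (fun m => |quantile μ m - quantile ν m|)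
      (volume.restrict (Ioo 0 1)) :=
    (aemeasurable_quantile.sub aemeasurable_quantile).abs.aestronglyMeasurable
  rw [integral_eq_lintegral_of_nonneg_ae (ae_of_all _ fun _ => abs_nonneg _) hmeas,
    integral_eq_lintegral_of_nonneg_ae (ae_of_all _ fun _ => abs_nonneg _)
      hint.aestronglyMeasurable]
  exact ENNReal.toReal_mono hint.lintegral_lt_top.ne (lintegral_abs_sub_quantile_le hfst hsnd)

theorem integral_abs_sub_quantile_le_Wp {p : ℝ} (hp : 1 ≤ p) (hμ : MemLp id (ENNReal.ofReal p) μ)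
    (hν : MemLp id (ENNReal.ofReal p) ν) :
    ∫ m in Ioo 0 1, |quantile μ m - quantile ν m| ≤ Wp p μ ν := by
  refine le_csInf ⟨_, μ.prod ν, inferInstance, by simp, by simp, rfl⟩ ?_
  rintro w ⟨π, hπ, hfst, hsnd, rfl⟩
  have hdiff := memLp_fst_sub_snd hfst hsnd hμ hν
  have hint : Integrable (fun q : ℝ × ℝ => |q.1 - q.2|) π :=
    (memLp_one_iff_integrable.1 (hdiff.mono_exponent (by simpa using hp))).abs
  have hint_p : Integrable (fun q : ℝ × ℝ => |q.1 - q.2| ^ p) π := by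
    simpa [ENNReal.toReal_ofReal (zero_le_one.trans hp)] using
      (integrable_norm_rpow_iff hdiff.1
        (ENNReal.ofReal_pos.2 (zero_lt_one.trans_le hp)).ne' ENNReal.ofReal_ne_top).2 hdiff
  calc ∫ m in Ioo 0 1, |quantile μ m - quantile ν m|
      ≤ ∫ q, |q.1 - q.2| ∂π := integral_abs_sub_quantile_le hfst hsnd hint
    _ ≤ (∫ q, |q.1 - q.2| ^ p ∂π) ^ (1 / p) :=
        integral_le_integral_rpow_rpow_one_div hp (fun _ => abs_nonneg _) hint hint_p

theorem abs_specRisk_sub_le {α : ℝ → ℝ} {M : ℝ} (hα_mono : MonotoneOn α (Icc 0 1))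
    (hα_nonneg : ∀ m ∈ Icc (0:ℝ) 1, 0 ≤ α m) (hα_bdd : ∀ m ∈ Icc (0:ℝ) 1, α m ≤ M)
    (hμ : Integrable id μ) (hν : Integrable id ν) :
    |specRisk α μ - specRisk α ν| ≤ M * ∫ m in Ioo 0 1, |quantile μ m - quantile ν m| := by
  have hIcc : volume.restrict (Icc (0:ℝ) 1) = volume.restrict (Ioo 0 1) :=
    Measure.restrict_congr_set Ioo_ae_eq_Icc.symm
  have hα_meas : AEStronglyMeasurable α (volume.restrict (Ioo 0 1)) := by
    rw [← hIcc]
    exact (aemeasurable_restrict_of_monotoneOn measurableSet_Icc hα_mono).aestronglyMeasurable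
  have hα_abs : ∀ᵐ m ∂(volume.restrict (Ioo (0:ℝ) 1)), |α m| ≤ M := by
    filter_upwards [ae_restrict_mem measurableSet_Ioo] with m hm
    rw [abs_of_nonneg (hα_nonneg m (Ioo_subset_Icc_self hm))]
    exact hα_bdd m (Ioo_subset_Icc_self hm)
  rw [specRisk, specRisk, hIcc]
  exact abs_integral_mul_sub_integral_mul_le (integrable_quantile μ hμ) (integrable_quantile ν hν)
    hα_meas hα_abs

end Coupling

/-- if `α ≤ M` then `R_α` is `M`-Lipschitz for the `p`-Wasserstein
distance on probability measures on ℝ with finite `p`-th moment. -/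
theorem stmt14 (α : ℝ → ℝ) (M : ℝ) (hα_mono : MonotoneOn α (Icc 0 1))
    (hα_nonneg : ∀ m ∈ Icc (0:ℝ) 1, 0 ≤ α m)
    (hα_bdd : ∀ m ∈ Icc (0:ℝ) 1, α m ≤ M)
    (p : ℝ) (hp : 1 ≤ p)
    (μ ν : Measure ℝ) [IsProbabilityMeasure μ] [IsProbabilityMeasure ν]
    (hμ : Integrable (fun x => |x| ^ p) μ) (hν : Integrable (fun x => |x| ^ p) ν) :
    |specRisk α μ - specRisk α ν| ≤ M * Wp p μ ν := by
  have hp₀ : 0 < p := zero_lt_one.trans_le hp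
  have hμp := memLp_id_of_integrable_abs_rpow hp₀ hμ
  have hνp := memLp_id_of_integrable_abs_rpow hp₀ hν
  have hM : 0 ≤ M := (hα_nonneg 0 (by simp)).trans (hα_bdd 0 (by simp))
  calc |specRisk α μ - specRisk α ν|
      ≤ M * ∫ m in Ioo 0 1, |quantile μ m - quantile ν m| :=
        abs_specRisk_sub_le hα_mono hα_nonneg hα_bdd
          (memLp_one_iff_integrable.1 (hμp.mono_exponent (by simpa)))
          (memLp_one_iff_integrable.1 (hνp.mono_exponent (by simpa)))
    _ ≤ M * Wp p μ ν := mul_le_mul_of_nonneg_left (integral_abs_sub_quantile_le_Wp hp hμp hνp) hM
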